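/- arXiv:math/9511203 — 5 statements merged into one kernel-verified Lean document; each statement's English description precedes it below -/
import Mathlib

section
/- There exists a constant C < ∞ such that for every continuously differentiable function f : ℝ → ℂ whose derivative lies in L²(ℝ) and every ε > 0, one has ‖f‖_{L²([ε,2ε])} ≤ C·‖f‖_{L²([−2ε,−ε])} + C·ε·‖f′‖_{L²(ℝ)}. -/
/-!
Pick a point `y ∈ [-2ε, -ε]` where `‖f y‖²` is at most its average over that interval. For
`x ∈ [ε, 2ε]`, the fundamental theorem of calculus and Cauchy–Schwarz give
`‖f x - f y‖² ≤ (x - y) ‖f'‖²_{L²} ≤ 4ε ‖f'‖²_{L²}`, so `‖f x‖² ≤ 2‖f y‖² + 8ε‖f'‖²_{L²}`;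
integrating over `[ε, 2ε]` yields `‖f‖²_{L²[ε,2ε]} ≤ 2‖f‖²_{L²[-2ε,-ε]} + 8ε²‖f'‖²_{L²}`.
-/

open MeasureTheory Set

/-- The `L²` norm of `f` over the set `J ⊆ ℝ` (w.r.t. Lebesgue measure). -/
noncomputable def L2 (f : ℝ → ℂ) (J : Set ℝ) : ℝ := (∫ x in J, ‖f x‖ ^ 2) ^ ((1 : ℝ)/2)

section

variable {E : Type*} [NormedAddCommGroup E]

theorem sq_setIntegral_norm_le_measureReal_mul {α : Type*} [MeasurableSpace α] {μ : Measure α}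
    {s : Set α} [IsFiniteMeasure (μ.restrict s)] {g : α → E} (hg : MemLp g 2 (μ.restrict s)) :
    (∫ x in s, ‖g x‖ ∂μ) ^ 2 ≤ μ.real s * ∫ x in s, ‖g x‖ ^ 2 ∂μ := by
  have hCS := integral_mul_norm_le_Lp_mul_Lq (μ := μ.restrict s) Real.HolderConjugate.two_two
    (by rw [ENNReal.ofReal_ofNat]; exact hg.norm) (memLp_const (1 : ℝ))
  simp only [norm_norm, norm_one, mul_one, one_pow, integral_const, smul_eq_mul,
    measureReal_restrict_apply_univ, Real.rpow_two, ← Real.sqrt_eq_rpow] at hCS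
  calc (∫ x in s, ‖g x‖ ∂μ) ^ 2
      ≤ (√(∫ x in s, ‖g x‖ ^ 2 ∂μ) * √(μ.real s)) ^ 2 :=
        pow_le_pow_left₀ (integral_nonneg fun _ ↦ norm_nonneg _) hCS 2
    _ = μ.real s * ∫ x in s, ‖g x‖ ^ 2 ∂μ := by
        rw [mul_pow, Real.sq_sqrt (integral_nonneg fun _ ↦ by positivity),
          Real.sq_sqrt measureReal_nonneg, mul_comm]

variable [NormedSpace ℝ E] [CompleteSpace E]

theorem norm_sub_sq_le_mul_setIntegral_norm_deriv_sq {f : ℝ → E} (hf : ContDiff ℝ 1 f)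
    {a b : ℝ} (hab : a ≤ b) :
    ‖f b - f a‖ ^ 2 ≤ (b - a) * ∫ t in Icc a b, ‖deriv f t‖ ^ 2 := by
  have hf' : Continuous (deriv f) := hf.continuous_deriv le_rfl
  have hftc : ∫ t in a..b, deriv f t = f b - f a :=
    intervalIntegral.integral_deriv_eq_sub
      (fun t _ ↦ (hf.differentiable one_ne_zero).differentiableAt) (hf'.intervalIntegrable _ _)
  have hnorm : ‖f b - f a‖ ≤ ∫ t in Icc a b, ‖deriv f t‖ := by
    rw [← hftc, integral_Icc_eq_integral_Ioc, ← intervalIntegral.integral_of_le hab]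
    exact intervalIntegral.norm_integral_le_integral_norm hab
  have hL2 : MemLp (deriv f) 2 (volume.restrict (Icc a b)) :=
    (memLp_two_iff_integrable_sq_norm hf'.aestronglyMeasurable).2
      ((hf'.norm.pow 2).integrableOn_Icc)
  calc ‖f b - f a‖ ^ 2 ≤ (∫ t in Icc a b, ‖deriv f t‖) ^ 2 :=
        pow_le_pow_left₀ (norm_nonneg _) hnorm 2
    _ ≤ volume.real (Icc a b) * ∫ t in Icc a b, ‖deriv f t‖ ^ 2 :=
        sq_setIntegral_norm_le_measureReal_mul hL2
    _ = (b - a) * ∫ t in Icc a b, ‖deriv f t‖ ^ 2 := by rw [Real.volume_real_Icc_of_le hab]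

theorem exists_mem_Icc_mul_le_setIntegral {g : ℝ → ℝ} {a b : ℝ} (hab : a ≤ b)
    (hg : ContinuousOn g (Icc a b)) : ∃ y ∈ Icc a b, (b - a) * g y ≤ ∫ x in Icc a b, g x := by
  obtain ⟨y, hy, hmin⟩ := isCompact_Icc.exists_isMinOn (nonempty_Icc.2 hab) hg
  refine ⟨y, hy, ?_⟩
  have := setIntegral_ge_of_const_le_real (μ := volume) measurableSet_Icc
    measure_Icc_lt_top.ne (fun x hx ↦ hmin hx) hg.integrableOn_Icc
  rwa [Real.volume_real_Icc_of_le hab, mul_comm] at this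

theorem setIntegral_Icc_le_mul_of_forall_le {g : ℝ → ℝ} {a b M : ℝ} (hab : a ≤ b)
    (hg : IntegrableOn g (Icc a b)) (hM : ∀ x ∈ Icc a b, g x ≤ M) :
    ∫ x in Icc a b, g x ≤ (b - a) * M := by
  calc ∫ x in Icc a b, g x ≤ ∫ _ in Icc a b, M :=
        setIntegral_mono_on hg (integrableOn_const measure_Icc_lt_top.ne) measurableSet_Icc hM
    _ = (b - a) * M := by rw [setIntegral_const, Real.volume_real_Icc_of_le hab, smul_eq_mul]

theorem setIntegral_norm_sq_Icc_le_of_Icc_left {f : ℝ → E} (hf : ContDiff ℝ 1 f) {a b ℓ : ℝ}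
    (hℓ : 0 ≤ ℓ) (hab : a + ℓ ≤ b) :
    ∫ x in Icc b (b + ℓ), ‖f x‖ ^ 2 ≤ 2 * (∫ x in Icc a (a + ℓ), ‖f x‖ ^ 2)
      + 2 * ℓ * (b + ℓ - a) * ∫ t in Icc a (b + ℓ), ‖deriv f t‖ ^ 2 := by
  set D := ∫ t in Icc a (b + ℓ), ‖deriv f t‖ ^ 2
  have hc : Continuous fun x ↦ ‖f x‖ ^ 2 := hf.continuous.norm.pow 2
  have hc' : Continuous fun t ↦ ‖deriv f t‖ ^ 2 := (hf.continuous_deriv le_rfl).norm.pow 2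
  obtain ⟨y, hy, hyA⟩ := exists_mem_Icc_mul_le_setIntegral (a := a) (b := a + ℓ) (by linarith)
    hc.continuousOn
  rw [add_sub_cancel_left] at hyA
  have hbound : ∀ x ∈ Icc b (b + ℓ), ‖f x‖ ^ 2 ≤ 2 * ‖f y‖ ^ 2 + 2 * (b + ℓ - a) * D := by
    intro x hx
    have hyx : y ≤ x := by linarith [hy.2, hx.1]
    have hDyx : ∫ t in Icc y x, ‖deriv f t‖ ^ 2 ≤ D :=
      setIntegral_mono_set hc'.integrableOn_Icc (ae_of_all _ fun _ ↦ by positivity)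
        (Icc_subset_Icc hy.1 hx.2).eventuallyLE
    have htri := norm_le_norm_add_norm_sub' (f x) (f y)
    calc ‖f x‖ ^ 2 ≤ 2 * ‖f y‖ ^ 2 + 2 * ‖f x - f y‖ ^ 2 := by
          nlinarith [norm_nonneg (f x), sq_nonneg (‖f y‖ - ‖f x - f y‖)]
      _ ≤ 2 * ‖f y‖ ^ 2 + 2 * ((x - y) * ∫ t in Icc y x, ‖deriv f t‖ ^ 2) := by
          gcongr; exact norm_sub_sq_le_mul_setIntegral_norm_deriv_sq hf hyx
      _ ≤ 2 * ‖f y‖ ^ 2 + 2 * (b + ℓ - a) * D := by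
          have : 0 ≤ ∫ t in Icc y x, ‖deriv f t‖ ^ 2 := integral_nonneg fun _ ↦ by positivity
          nlinarith [hy.1, hx.2]
  calc ∫ x in Icc b (b + ℓ), ‖f x‖ ^ 2
      ≤ (b + ℓ - b) * (2 * ‖f y‖ ^ 2 + 2 * (b + ℓ - a) * D) :=
        setIntegral_Icc_le_mul_of_forall_le (by linarith) hc.integrableOn_Icc hbound
    _ ≤ _ := by rw [add_sub_cancel_left]; linear_combination 2 * hyA

end

/-- Lemma 2, first inequality: `‖f‖_{L²[ε,2ε]} ≤ C‖f‖_{L²[-2ε,-ε]} + Cε‖f′‖_{L²(ℝ)}`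
for `C¹` functions with derivative in `L²(ℝ)`. -/
theorem lemma2_first :
    ∃ C : ℝ, ∀ f : ℝ → ℂ, ContDiff ℝ 1 f → MemLp (deriv f) 2 (volume : Measure ℝ) →
      ∀ ε : ℝ, 0 < ε →
        L2 f (Icc ε (2 * ε))
          ≤ C * L2 f (Icc (-(2 * ε)) (-ε)) + C * ε * L2 (deriv f) univ := by
  refine ⟨3, fun f hf hf' ε hε ↦ ?_⟩
  set A := ∫ x in Icc (-(2 * ε)) (-ε), ‖f x‖ ^ 2
  set B := ∫ t, ‖deriv f t‖ ^ 2
  have key : ∫ x in Icc ε (2 * ε), ‖f x‖ ^ 2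
      ≤ 2 * A + 2 * ε * (4 * ε) * ∫ t in Icc (-(2 * ε)) (2 * ε), ‖deriv f t‖ ^ 2 := by
    have := setIntegral_norm_sq_Icc_le_of_Icc_left hf (a := -(2 * ε)) (b := ε) (ℓ := ε) hε.le
      (by linarith)
    rwa [show -(2 * ε) + ε = -ε by ring, show ε + ε = 2 * ε by ring,
      show 2 * ε - -(2 * ε) = 4 * ε by ring] at this
  have hA : 0 ≤ A := integral_nonneg fun _ ↦ by positivity
  have hB : 0 ≤ B := integral_nonneg fun _ ↦ by positivity
  have hDB : ∫ t in Icc (-(2 * ε)) (2 * ε), ‖deriv f t‖ ^ 2 ≤ B :=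
    setIntegral_le_integral (hf'.integrable_norm_pow two_ne_zero) (ae_of_all _ fun _ ↦ by positivity)
  simp only [L2, ← Real.sqrt_eq_rpow, Measure.restrict_univ]
  calc √(∫ x in Icc ε (2 * ε), ‖f x‖ ^ 2) ≤ √(2 * A + 8 * ε ^ 2 * B) := by
        refine Real.sqrt_le_sqrt (key.trans ?_)
        nlinarith [mul_le_mul_of_nonneg_left hDB (by positivity : 0 ≤ ε ^ 2)]
    _ ≤ 3 * √A + 3 * ε * √B := by
        rw [Real.sqrt_le_iff]
        refine ⟨by positivity, ?_⟩
        nlinarith [Real.sq_sqrt hA, Real.sq_sqrt hB, Real.sqrt_nonneg A, Real.sqrt_nonneg B,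
          mul_nonneg hε.le (mul_nonneg (Real.sqrt_nonneg A) (Real.sqrt_nonneg B))]
end

section
/- For every compact K ⊂ ℝ there exists γ₀ < ∞ such that every ζ ∈ 𝔖 with Re ζ ∈ K satisfies |Im ζ| ≤ γ₀. -/
open MeasureTheory Set

/-- The ordinary differential operator `H_ζ` acting on functions on `ℝ`:
`(H_ζ f)(x) = f″(x) + (β₁(x)+β₂(x))·f′(x)
  + (ζ²·a(x)² − iζ·a′(x) + iζ·a(x)·(β₁(x)−β₂(x)) + β₃(x))·f(x)`. -/
noncomputable def Hop (a : ℝ → ℝ) (β₁ β₂ β₃ : ℝ → ℂ) (ζ : ℂ) (f : ℝ → ℂ) (x : ℝ) : ℂ :=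
  deriv (deriv f) x + (β₁ x + β₂ x) * deriv f x +
    (ζ ^ 2 * (Complex.ofReal (a x)) ^ 2 - Complex.I * ζ * Complex.ofReal (deriv a x)
      + Complex.I * ζ * Complex.ofReal (a x) * (β₁ x - β₂ x) + β₃ x) * f x

/-- The set `𝔖` of `ζ ∈ ℂ` for which the Dirichlet problem `H_ζ g = 0` on `I = [-r,r]`,
`g(-r) = g(r) = 0`, has a nontrivial solution. -/
def frakS (r : ℝ) (a : ℝ → ℝ) (β₁ β₂ β₃ : ℝ → ℂ) : Set ℂ :=
  {ζ : ℂ | ∃ g : ℝ → ℂ, ContDiff ℝ 2 g ∧ (∃ x ∈ Icc (-r) r, g x ≠ 0) ∧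
    (∀ x ∈ Icc (-r) r, Hop a β₁ β₂ β₃ ζ g x = 0) ∧ g (-r) = 0 ∧ g r = 0}

set_option maxHeartbeats 1000000

/-- AM-GM step: the quadratic form bound. -/
lemma frakS_aux_step (u G B : ℂ) (c : ℝ) (h : 2*c + (Complex.normSq B)/2 ≤ 0) :
    0 ≤ 2*Complex.normSq u - 2*(B*u*(starRingEnd ℂ G)).re - 2*c*Complex.normSq G := by
  have h1 : (B*u*(starRingEnd ℂ G)).re ≤ ‖B‖ * ‖u‖ * ‖G‖ := by
    calc (B*u*(starRingEnd ℂ G)).re ≤ ‖B*u*(starRingEnd ℂ G)‖ := Complex.re_le_norm _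
    _ = ‖B‖ * ‖u‖ * ‖G‖ := by
        simp [map_mul, Complex.norm_conj]
  rw [← Complex.sq_norm u, ← Complex.sq_norm G, ← Complex.sq_norm B] at *
  nlinarith [sq_nonneg (2*‖u‖ - ‖B‖ * ‖G‖),
    sq_nonneg (‖G‖), norm_nonneg G, norm_nonneg u, norm_nonneg B,
    mul_nonneg (mul_nonneg (norm_nonneg B) (norm_nonneg u)) (norm_nonneg G)]

lemma frakS_aux_re (g2x u G B Cc : ℂ) (h : g2x = -(B*u + Cc*G)) :
    (g2x * star G + u * star u + (u * star u + G * star g2x)).re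
      = 2*Complex.normSq u - 2*(B*u*(starRingEnd ℂ G)).re - 2*Cc.re*Complex.normSq G := by
  subst h
  simp only [Complex.star_def, Complex.normSq_apply, Complex.mul_re, Complex.mul_im,
    Complex.add_re, Complex.add_im, Complex.neg_re, Complex.neg_im, Complex.conj_re,
    Complex.conj_im]
  ring

/-- For `Re ζ` in a compact set, the imaginary parts of elements of `𝔖` are bounded. -/
theorem frakS_im_bounded (r : ℝ) (hr : 0 < r) (a : ℝ → ℝ) (ha : ContDiff ℝ (⊤ : ℕ∞) a)
    (ha0 : ∀ x ∈ Icc (-r) r, a x ≠ 0)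
    (β₁ β₂ β₃ : ℝ → ℂ) (hβ₁ : ContDiff ℝ (⊤ : ℕ∞) β₁) (hβ₂ : ContDiff ℝ (⊤ : ℕ∞) β₂)
    (hβ₃ : ContDiff ℝ (⊤ : ℕ∞) β₃)
    (K : Set ℝ) (hK : IsCompact K) :
    ∃ γ₀ : ℝ, ∀ ζ ∈ frakS r a β₁ β₂ β₃, ζ.re ∈ K → |ζ.im| ≤ γ₀ := by
  have hIcc : (Icc (-r) r).Nonempty := ⟨0, by constructor <;> linarith⟩
  -- constants
  obtain ⟨xm, hxm, hminm⟩ := (isCompact_Icc (a := -r) (b := r)).exists_isMinOn hIcc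
    ((ha.continuous.pow 2).continuousOn : ContinuousOn (fun x => (a x)^2) _)
  set δ : ℝ := (a xm)^2 with hδdef
  have hδ : 0 < δ := pow_two_pos_of_ne_zero (ha0 xm hxm)
  have hmin : ∀ x ∈ Icc (-r) r, δ ≤ (a x)^2 := fun x hx => hminm hx
  have hda : Continuous (deriv a) := (contDiff_infty_iff_deriv.mp (ha.of_le (by simp))).2.continuous
  obtain ⟨Ca0, hCa0⟩ := (isCompact_Icc (a := -r) (b := r)).exists_bound_of_continuousOn
    ha.continuous.continuousOn
  obtain ⟨Cd0, hCd0⟩ := (isCompact_Icc (a := -r) (b := r)).exists_bound_of_continuousOn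
    hda.continuousOn
  obtain ⟨C10, hC10⟩ := (isCompact_Icc (a := -r) (b := r)).exists_bound_of_continuousOn
    ((hβ₁.continuous.sub hβ₂.continuous).continuousOn : ContinuousOn (fun x => β₁ x - β₂ x) _)
  obtain ⟨C20, hC20⟩ := (isCompact_Icc (a := -r) (b := r)).exists_bound_of_continuousOn
    hβ₃.continuous.continuousOn
  obtain ⟨Cb0, hCb0⟩ := (isCompact_Icc (a := -r) (b := r)).exists_bound_of_continuousOn
    ((hβ₁.continuous.add hβ₂.continuous).continuousOn : ContinuousOn (fun x => β₁ x + β₂ x) _)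
  obtain ⟨S0, hS0⟩ := hK.exists_bound_of_continuousOn continuousOn_id
  set Ca := max Ca0 0 with hCadef
  set Cd := max Cd0 0 with hCddef
  set C1 := max C10 0 with hC1def
  set C2 := max C20 0 with hC2def
  set Cb := max Cb0 0 with hCbdef
  set S := max S0 0 with hSdef
  have hCa : ∀ x ∈ Icc (-r) r, |a x| ≤ Ca := fun x hx => le_max_of_le_left (hCa0 x hx)
  have hCd : ∀ x ∈ Icc (-r) r, |deriv a x| ≤ Cd := fun x hx => le_max_of_le_left (hCd0 x hx)
  have hC1 : ∀ x ∈ Icc (-r) r, ‖β₁ x - β₂ x‖ ≤ C1 := fun x hx => le_max_of_le_left (hC10 x hx)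
  have hC2 : ∀ x ∈ Icc (-r) r, ‖β₃ x‖ ≤ C2 := fun x hx => le_max_of_le_left (hC20 x hx)
  have hCb : ∀ x ∈ Icc (-r) r, ‖β₁ x + β₂ x‖ ≤ Cb := fun x hx => le_max_of_le_left (hCb0 x hx)
  have hS : ∀ σ ∈ K, |σ| ≤ S := fun σ hσ => le_max_of_le_left (hS0 σ hσ)
  have hCa' : 0 ≤ Ca := le_max_right _ _
  have hCd' : 0 ≤ Cd := le_max_right _ _
  have hC1' : 0 ≤ C1 := le_max_right _ _
  have hC2' : 0 ≤ C2 := le_max_right _ _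
  have hCb' : 0 ≤ Cb := le_max_right _ _
  have hS' : 0 ≤ S := le_max_right _ _
  set Q : ℝ := 2*(Cd + Ca*C1) with hQdef
  set P : ℝ := 2*S^2*Ca^2 + S*Q + 2*C2 + Cb^2/2 with hPdef
  have hQ : 0 ≤ Q := by positivity
  have hP : 0 ≤ P := by positivity
  refine ⟨max 1 ((P+Q)/(2*δ)), ?_⟩
  intro ζ hζ hre
  by_contra hcon
  push_neg at hcon
  have hγ1 : (1:ℝ) ≤ |ζ.im| := le_of_lt (lt_of_le_of_lt (le_max_left _ _) hcon)
  have hγ2 : (P+Q)/(2*δ) ≤ |ζ.im| := le_of_lt (lt_of_le_of_lt (le_max_right _ _) hcon)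
  have hγab : P + Q ≤ 2*δ* |ζ.im| := by
    rw [div_le_iff₀ (by positivity)] at hγ2; linarith [hγ2]
  have hkey2 : P + Q* |ζ.im| ≤ 2*δ* |ζ.im|^2 := by
    nlinarith [mul_le_mul_of_nonneg_left hγ1 hP, mul_le_mul_of_nonneg_right hγab (abs_nonneg ζ.im)]
  obtain ⟨g, hg, ⟨x₀, hx₀, hgx₀⟩, hODE, hga, hgb⟩ := hζ
  set cf : ℝ → ℂ := fun x => ζ ^ 2 * (Complex.ofReal (a x)) ^ 2
      - Complex.I * ζ * Complex.ofReal (deriv a x)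
      + Complex.I * ζ * Complex.ofReal (a x) * (β₁ x - β₂ x) + β₃ x with hcfdef
  -- pointwise coefficient bound
  have hζn : ‖ζ‖ ≤ S + |ζ.im| := by
    show ‖ζ‖ ≤ S + |ζ.im|
    exact le_trans (Complex.norm_le_abs_re_add_abs_im ζ) (by linarith [hS ζ.re hre])
  have key : ∀ x ∈ Icc (-r) r, 2*(cf x).re + Complex.normSq (β₁ x + β₂ x)/2 ≤ 0 := by
    intro x hx
    have hσ : |ζ.re| ≤ S := hS ζ.re hre
    have e1 : (cf x).re ≤ ζ.re^2*(a x)^2 - ζ.im^2*(a x)^2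
        + ‖ζ‖* |deriv a x| + ‖ζ‖*(|a x| *‖β₁ x - β₂ x‖) + ‖β₃ x‖ := by
      have hA : (ζ ^ 2 * (Complex.ofReal (a x)) ^ 2).re = (ζ.re^2 - ζ.im^2)*(a x)^2 := by
        simp [pow_two, Complex.mul_re, Complex.mul_im, Complex.ofReal_re, Complex.ofReal_im]
        try ring
      have hB : (-(Complex.I * ζ * Complex.ofReal (deriv a x))).re ≤ ‖ζ‖* |deriv a x| := by
        calc (-(Complex.I * ζ * Complex.ofReal (deriv a x))).re
            ≤ ‖-(Complex.I * ζ * Complex.ofReal (deriv a x))‖ := Complex.re_le_norm _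
          _ = ‖ζ‖* |deriv a x| := by
              simp [map_mul, Complex.norm_real, Real.norm_eq_abs]
      have hC : (Complex.I * ζ * Complex.ofReal (a x) * (β₁ x - β₂ x)).re
          ≤ ‖ζ‖*(|a x| *‖β₁ x - β₂ x‖) := by
        calc (Complex.I * ζ * Complex.ofReal (a x) * (β₁ x - β₂ x)).re
            ≤ ‖Complex.I * ζ * Complex.ofReal (a x) * (β₁ x - β₂ x)‖ :=
              Complex.re_le_norm _
          _ = ‖ζ‖*(|a x| *‖β₁ x - β₂ x‖) := by
              simp [map_mul, Complex.norm_real, Real.norm_eq_abs]; ring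
      have hD : (β₃ x).re ≤ ‖β₃ x‖ := by
        exact Complex.re_le_norm _
      have hsplit : (cf x).re = (ζ ^ 2 * (Complex.ofReal (a x)) ^ 2).re
          + (-(Complex.I * ζ * Complex.ofReal (deriv a x))).re
          + (Complex.I * ζ * Complex.ofReal (a x) * (β₁ x - β₂ x)).re + (β₃ x).re := by
        simp [hcfdef, Complex.add_re, Complex.sub_re, Complex.neg_re]
        try ring
      rw [hsplit, hA]; nlinarith [hB, hC, hD]
    -- products
    have pa : (a x)^2 ≤ Ca^2 := by
      have := hCa x hx
      nlinarith [abs_nonneg (a x), sq_abs (a x)]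
    have p1 : ζ.re^2*(a x)^2 ≤ S^2*Ca^2 := by
      have h1 : ζ.re^2 ≤ S^2 := by nlinarith [sq_abs ζ.re, abs_nonneg ζ.re]
      exact mul_le_mul h1 pa (sq_nonneg _) (by positivity)
    have p2 : ζ.im^2*δ ≤ ζ.im^2*(a x)^2 :=
      mul_le_mul_of_nonneg_left (hmin x hx) (sq_nonneg _)
    have p3 : ‖ζ‖* |deriv a x| ≤ (S + |ζ.im|)*Cd :=
      mul_le_mul hζn (hCd x hx) (abs_nonneg _) (by positivity)
    have p4 : ‖ζ‖*(|a x| *‖β₁ x - β₂ x‖) ≤ (S + |ζ.im|)*(Ca*C1) :=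
      mul_le_mul hζn (mul_le_mul (hCa x hx) (hC1 x hx) (norm_nonneg _) hCa')
        (by positivity) (by positivity)
    have pb : Complex.normSq (β₁ x + β₂ x) ≤ Cb^2 := by
      rw [← Complex.sq_norm]
      have := hCb x hx
      nlinarith [norm_nonneg (β₁ x + β₂ x)]
    have hkey2' := hkey2
    rw [hPdef, hQdef, sq_abs] at hkey2'
    linarith [e1, p1, p2, p3, p4, hC2 x hx, pb, hkey2']
  -- derivatives of g
  have hg' : ContDiff ℝ ((1:ℕ∞)+1) g := by exact_mod_cast hg
  have hgdiff : Differentiable ℝ g := hg'.differentiable (by norm_num)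
  have hg1 : Differentiable ℝ (deriv g) :=
    ((contDiff_succ_iff_deriv).mp hg').2.2.differentiable (by simp)
  set φ : ℝ → ℝ := fun x => (g x * star (g x)).re with hφdef
  set φ₁ : ℝ → ℝ := fun x => (deriv g x * star (g x) + g x * star (deriv g x)).re with hφ₁def
  have hgat : ∀ x, HasDerivAt g (deriv g x) x := fun x => (hgdiff x).hasDerivAt
  have hg1at : ∀ x, HasDerivAt (deriv g) (deriv (deriv g) x) x := fun x => (hg1 x).hasDerivAt
  have hφat : ∀ x, HasDerivAt φ (φ₁ x) x := fun x =>
    Complex.reCLM.hasFDerivAt.comp_hasDerivAt x (((hgat x).mul (hgat x).star))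
  have hφ₁at : ∀ x, HasDerivAt φ₁ ((deriv (deriv g) x * star (g x)
      + deriv g x * star (deriv g x)
      + (deriv g x * star (deriv g x) + g x * star (deriv (deriv g) x))).re) x := fun x =>
    Complex.reCLM.hasFDerivAt.comp_hasDerivAt x
      ((((hg1at x).mul (hgat x).star).add ((hgat x).mul (hg1at x).star)))
  have hdφ : deriv φ = φ₁ := funext fun x => (hφat x).deriv
  -- second derivative nonneg on interior
  have h2nd : ∀ x ∈ interior (Icc (-r) r), 0 ≤ deriv^[2] φ x := by
    intro x hx
    have hxI : x ∈ Icc (-r) r := interior_subset hx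
    have hg2eq : deriv (deriv g) x
        = -((β₁ x + β₂ x) * deriv g x + cf x * g x) := by
      have h0 := hODE x hxI
      unfold Hop at h0
      rw [hcfdef]
      linear_combination h0
    have : deriv^[2] φ x = deriv (deriv φ) x := rfl
    rw [this, hdφ, (hφ₁at x).deriv,
      frakS_aux_re _ _ _ _ _ hg2eq]
    exact frakS_aux_step _ _ _ _ (key x hxI)
  have hconv : ConvexOn ℝ (Icc (-r) r) φ :=
    convexOn_of_deriv2_nonneg (convex_Icc _ _)
      (fun x _ => ((hφat x).continuousAt.continuousWithinAt))
      (fun x _ => ((hφat x).differentiableAt.differentiableWithinAt))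
      (by rw [hdφ]; exact fun x _ => (hφ₁at x).differentiableAt.differentiableWithinAt)
      h2nd
  -- conclude φ ≤ 0 on Icc
  have hφle : ∀ x ∈ Icc (-r) r, φ x ≤ 0 := by
    intro x hx
    set t : ℝ := (x + r)/(2*r) with htdef
    have ht0 : 0 ≤ t := by
      apply div_nonneg _ (by linarith); linarith [hx.1]
    have ht1 : 0 ≤ 1 - t := by
      have : t ≤ 1 := by rw [div_le_one (by linarith)]; linarith [hx.2]
      linarith
    have hco := hconv.2 (left_mem_Icc.mpr (by linarith)) (right_mem_Icc.mpr (by linarith))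
      ht1 ht0 (by ring)
    have hxeq : (1-t) • (-r) + t • r = x := by
      simp only [smul_eq_mul, htdef]
      field_simp
      ring
    rw [hxeq] at hco
    have hφa : φ (-r) = 0 := by simp [hφdef, hga]
    have hφb : φ r = 0 := by simp [hφdef, hgb]
    rw [hφa, hφb] at hco
    simpa using hco
  have hpos : 0 < φ x₀ := by
    have : g x₀ * star (g x₀) = (Complex.normSq (g x₀) : ℂ) := by
      rw [Complex.star_def, Complex.mul_conj]
    rw [hφdef]
    simp only [this, Complex.ofReal_re]
    exact Complex.normSq_pos.mpr hgx₀
  linarith [hφle x₀ hx₀]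
end

section
/- For every compact K ⊂ ℝ there exist constants C < ∞ and γ₀ < ∞ such that for all s ∈ K and all γ ∈ ℝ with |γ| ≥ γ₀, writing ζ = s + iγ, every twice continuously differentiable function g : I → ℂ satisfying H_ζ g = 0 on I obeys ‖g′‖²_{L²(I)} + γ²·‖g‖²_{L²(I)} ≤ C·|g(−r)·g′(−r)| + C·|g(r)·g′(r)|. -/
open MeasureTheory Set

lemma L2_sq (f : ℝ → ℂ) (J : Set ℝ) (h : 0 ≤ ∫ x in J, ‖f x‖ ^ 2) :
    L2 f J ^ 2 = ∫ x in J, ‖f x‖ ^ 2 := by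
  rw [L2, ← Real.rpow_natCast _ 2, ← Real.rpow_mul h]; norm_num

lemma re_mul_conj_self (z : ℂ) : (z * (starRingEnd ℂ) z).re = ‖z‖ ^ 2 := by
  rw [Complex.mul_conj, Complex.normSq_eq_norm_sq, Complex.ofReal_re]

lemma re_mul_mul_conj (q z : ℂ) : (q * z * (starRingEnd ℂ) z).re = q.re * ‖z‖ ^ 2 := by
  rw [mul_assoc, Complex.mul_conj, Complex.normSq_eq_norm_sq,
    Complex.mul_re, Complex.ofReal_re, Complex.ofReal_im]
  ring


set_option maxHeartbeats 2000000 in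
/-- Inequality (5.3): for `s` in a compact set and `|γ|` large, solutions of `H_ζ g = 0`
on `I`, `ζ = s + iγ`, satisfy `‖g′‖² + γ²‖g‖² ≤ C|g(-r)g′(-r)| + C|g(r)g′(r)|`. -/
theorem estimate_5_3 (r : ℝ) (hr : 0 < r) (a : ℝ → ℝ) (ha : ContDiff ℝ (⊤ : ℕ∞) a)
    (ha0 : ∀ x ∈ Icc (-r) r, a x ≠ 0)
    (β₁ β₂ β₃ : ℝ → ℂ) (hβ₁ : ContDiff ℝ (⊤ : ℕ∞) β₁) (hβ₂ : ContDiff ℝ (⊤ : ℕ∞) β₂)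
    (hβ₃ : ContDiff ℝ (⊤ : ℕ∞) β₃)
    (K : Set ℝ) (hK : IsCompact K) :
    ∃ C : ℝ, ∃ γ₀ : ℝ, ∀ s ∈ K, ∀ γ : ℝ, γ₀ ≤ |γ| →
      ∀ g : ℝ → ℂ, ContDiff ℝ 2 g →
        (∀ x ∈ Icc (-r) r, Hop a β₁ β₂ β₃ (Complex.mk s γ) g x = 0) →
        L2 (deriv g) (Icc (-r) r) ^ 2 + γ ^ 2 * L2 g (Icc (-r) r) ^ 2
          ≤ C * ‖g (-r) * deriv g (-r)‖ + C * ‖g r * deriv g r‖ := by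
  have hac : Continuous a := ha.continuous
  have ha2 : ContDiff ℝ ((1 : ℕ∞) + 1) a := by exact_mod_cast ha.of_le (WithTop.coe_le_coe.mpr le_top)
  have hac' : Continuous (deriv a) :=
    ((contDiff_succ_iff_deriv.mp ha2).2.2).continuous
  have hβ₁c : Continuous β₁ := hβ₁.continuous
  have hβ₂c : Continuous β₂ := hβ₂.continuous
  have hβ₃c : Continuous β₃ := hβ₃.continuous
  -- positive lower bound for a^2 on I
  obtain ⟨c, hc0, hc⟩ : ∃ c > 0, ∀ x ∈ Icc (-r) r, c ≤ a x ^ 2 := by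
    obtain ⟨x₀, hx₀, hmin⟩ := isCompact_Icc.exists_isMinOn (s := Icc (-r) r)
      (f := fun x => a x ^ 2) (nonempty_Icc.2 (by linarith)) ((hac.pow 2).continuousOn)
    exact ⟨a x₀ ^ 2, pow_two_pos_of_ne_zero (ha0 x₀ hx₀), fun x hx => hmin hx⟩
  -- bound M₁ for β₁+β₂
  obtain ⟨M₁', hM₁'⟩ := isCompact_Icc.exists_bound_of_continuousOn (s := Icc (-r) r)
    (hβ₁c.add hβ₂c).continuousOn
  set M₁ : ℝ := max M₁' 0 with hM₁def
  have hM₁0 : 0 ≤ M₁ := le_max_right _ _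
  have hM₁ : ∀ x ∈ Icc (-r) r, ‖β₁ x + β₂ x‖ ≤ M₁ := fun x hx =>
    (hM₁' x hx).trans (le_max_left _ _)
  -- bound M₂ for P := a' - a * Re(β₁-β₂)
  set P : ℝ → ℝ := fun x => deriv a x - a x * (β₁ x - β₂ x).re with hPdef
  have hPc : Continuous P := hac'.sub (hac.mul (Complex.continuous_re.comp (hβ₁c.sub hβ₂c)))
  obtain ⟨M₂', hM₂'⟩ := isCompact_Icc.exists_bound_of_continuousOn (s := Icc (-r) r)
    hPc.continuousOn
  set M₂ : ℝ := max M₂' 0 with hM₂def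
  have hM₂0 : 0 ≤ M₂ := le_max_right _ _
  have hM₂ : ∀ x ∈ Icc (-r) r, |P x| ≤ M₂ := fun x hx =>
    (Real.norm_eq_abs _ ▸ hM₂' x hx).trans (le_max_left _ _)
  -- bound M₃ for Q s x := s²a² - s a Im(β₁-β₂) + Re β₃
  set Q : ℝ → ℝ → ℝ := fun s x =>
    s ^ 2 * a x ^ 2 - s * a x * (β₁ x - β₂ x).im + (β₃ x).re with hQdef
  have hQc : Continuous fun p : ℝ × ℝ => Q p.1 p.2 := by
    apply Continuous.add
    · exact (((continuous_fst.pow 2).mul ((hac.comp continuous_snd).pow 2)).sub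
        ((continuous_fst.mul (hac.comp continuous_snd)).mul
          (Complex.continuous_im.comp ((hβ₁c.sub hβ₂c).comp continuous_snd))))
    · exact Complex.continuous_re.comp (hβ₃c.comp continuous_snd)
  obtain ⟨M₃', hM₃'⟩ := (hK.prod isCompact_Icc).exists_bound_of_continuousOn hQc.continuousOn
  set M₃ : ℝ := max M₃' 0 with hM₃def
  have hM₃0 : 0 ≤ M₃ := le_max_right _ _
  have hM₃ : ∀ s ∈ K, ∀ x ∈ Icc (-r) r, |Q s x| ≤ M₃ := fun s hs x hx =>
    (Real.norm_eq_abs _ ▸ hM₃' (s, x) ⟨hs, hx⟩).trans (le_max_left _ _)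
  refine ⟨max 2 (2 / c), max 1 (2 * (M₂ + M₃ + M₁ ^ 2 / 2 + 1) / c), ?_⟩
  set C : ℝ := max 2 (2 / c)
  intro s hs γ hγ g hg hODE
  set ζ : ℂ := Complex.mk s γ with hζ
  -- regularity of g
  have hg2' : ContDiff ℝ ((1 : ℕ∞) + 1) g := by exact_mod_cast hg
  have hg1 : Differentiable ℝ g := hg2'.differentiable (by norm_num)
  have hgc : Continuous g := hg1.continuous
  have hdg : ContDiff ℝ 1 (deriv g) := (contDiff_succ_iff_deriv.mp hg2').2.2
  have hdg' : ContDiff ℝ ((0 : ℕ∞) + 1) (deriv g) := by exact_mod_cast hdg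
  have hg1d : Differentiable ℝ (deriv g) := hdg.differentiable one_ne_zero
  have hg1c : Continuous (deriv g) := hg1d.continuous
  have hg2c : Continuous (deriv (deriv g)) := ((contDiff_succ_iff_deriv.mp hdg').2.2).continuous
  -- the zeroth order coefficient
  set q : ℝ → ℂ := fun x => ζ ^ 2 * (Complex.ofReal (a x)) ^ 2
      - Complex.I * ζ * Complex.ofReal (deriv a x)
      + Complex.I * ζ * Complex.ofReal (a x) * (β₁ x - β₂ x) + β₃ x with hqdef
  have hqc : Continuous q := by
    apply Continuous.add
    apply Continuous.add
    apply Continuous.sub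
    · exact continuous_const.mul ((Complex.continuous_ofReal.comp hac).pow 2)
    · exact continuous_const.mul (Complex.continuous_ofReal.comp hac')
    · exact (continuous_const.mul (Complex.continuous_ofReal.comp hac)).mul (hβ₁c.sub hβ₂c)
    · exact hβ₃c
  have hqre : ∀ x, -(q x).re = γ ^ 2 * a x ^ 2 - γ * P x - Q s x := by
    intro x
    simp only [hqdef, hPdef, hQdef, hζ]
    simp [Complex.ext_iff, pow_two, Complex.mul_re, Complex.mul_im]
    ring
  -- the ODE rewritten
  have hODE' : ∀ x ∈ Icc (-r) r,
      deriv (deriv g) x = -((β₁ x + β₂ x) * deriv g x + q x * g x) := by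
    intro x hx
    have h := hODE x hx
    simp only [Hop] at h
    simp only [hqdef]
    linear_combination h
  -- the function whose derivative we integrate
  set φ : ℝ → ℝ := fun x => (deriv g x * (starRingEnd ℂ) (g x)).re with hφdef
  have hφ : ∀ x, HasDerivAt φ
      ((deriv (deriv g) x * (starRingEnd ℂ) (g x)).re + ‖deriv g x‖ ^ 2) x := by
    intro x
    have h1 : HasDerivAt (fun y => deriv g y * (starRingEnd ℂ) (g y))
        (deriv (deriv g) x * (starRingEnd ℂ) (g x)
          + deriv g x * (starRingEnd ℂ) (deriv g x)) x :=
      ((hg1d x).hasDerivAt).mul ((hg1 x).hasDerivAt.star)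
    have h2 := Complex.reCLM.hasFDerivAt.comp_hasDerivAt x h1
    have h3 : Complex.reCLM (deriv (deriv g) x * (starRingEnd ℂ) (g x)
        + deriv g x * (starRingEnd ℂ) (deriv g x))
        = (deriv (deriv g) x * (starRingEnd ℂ) (g x)).re + ‖deriv g x‖ ^ 2 := by
      simp only [Complex.reCLM_apply, Complex.add_re]
      rw [re_mul_conj_self]
    rw [h3] at h2
    exact h2
  have hψc : Continuous fun x =>
      (deriv (deriv g) x * (starRingEnd ℂ) (g x)).re + ‖deriv g x‖ ^ 2 :=
    (Complex.continuous_re.comp (hg2c.mul (Complex.continuous_conj.comp hgc))).add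
      ((hg1c.norm).pow 2)
  have hFTC : ∫ x in Icc (-r) r,
      ((deriv (deriv g) x * (starRingEnd ℂ) (g x)).re + ‖deriv g x‖ ^ 2) = φ r - φ (-r) := by
    rw [integral_Icc_eq_integral_Ioc, ← intervalIntegral.integral_of_le (by linarith)]
    exact intervalIntegral.integral_eq_sub_of_hasDerivAt (fun x _ => hφ x)
      (hψc.intervalIntegrable _ _)
  -- rewrite the integrand on I using the ODE
  have hpt : ∀ x ∈ Icc (-r) r,
      (deriv (deriv g) x * (starRingEnd ℂ) (g x)).re + ‖deriv g x‖ ^ 2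
      = ‖deriv g x‖ ^ 2 + (-(q x).re) * ‖g x‖ ^ 2
        - ((β₁ x + β₂ x) * deriv g x * (starRingEnd ℂ) (g x)).re := by
    intro x hx
    rw [hODE' x hx]
    have e1 : (-((β₁ x + β₂ x) * deriv g x + q x * g x) * (starRingEnd ℂ) (g x))
        = -((β₁ x + β₂ x) * deriv g x * (starRingEnd ℂ) (g x))
          - q x * g x * (starRingEnd ℂ) (g x) := by ring
    rw [e1, Complex.sub_re, Complex.neg_re, re_mul_mul_conj]
    ring
  -- integrability
  have hI1 : IntegrableOn (fun x => ‖deriv g x‖ ^ 2) (Icc (-r) r) :=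
    ((hg1c.norm).pow 2).integrableOn_Icc
  have hI0 : IntegrableOn (fun x => ‖g x‖ ^ 2) (Icc (-r) r) :=
    ((hgc.norm).pow 2).integrableOn_Icc
  have hI2 : IntegrableOn (fun x => (-(q x).re) * ‖g x‖ ^ 2) (Icc (-r) r) :=
    (((Complex.continuous_re.comp hqc).neg).mul ((hgc.norm).pow 2)).integrableOn_Icc
  have hI3 : IntegrableOn
      (fun x => ((β₁ x + β₂ x) * deriv g x * (starRingEnd ℂ) (g x)).re) (Icc (-r) r) :=
    (Complex.continuous_re.comp (((hβ₁c.add hβ₂c).mul hg1c).mul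
      (Complex.continuous_conj.comp hgc))).integrableOn_Icc
  set A : ℝ := ∫ x in Icc (-r) r, ‖deriv g x‖ ^ 2 with hAdef
  set D : ℝ := ∫ x in Icc (-r) r, ‖g x‖ ^ 2 with hDdef
  set T : ℝ := ∫ x in Icc (-r) r,
    ((β₁ x + β₂ x) * deriv g x * (starRingEnd ℂ) (g x)).re with hTdef
  set E : ℝ := ∫ x in Icc (-r) r, (-(q x).re) * ‖g x‖ ^ 2 with hEdef
  have hA0 : 0 ≤ A := setIntegral_nonneg measurableSet_Icc (fun x _ => by positivity)
  have hD0 : 0 ≤ D := setIntegral_nonneg measurableSet_Icc (fun x _ => by positivity)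
  have hmain : A + E - T = φ r - φ (-r) := by
    have h2 : ∫ x in Icc (-r) r,
        (‖deriv g x‖ ^ 2 + (-(q x).re) * ‖g x‖ ^ 2
          - ((β₁ x + β₂ x) * deriv g x * (starRingEnd ℂ) (g x)).re) = φ r - φ (-r) := by
      rw [← hFTC]
      exact setIntegral_congr_fun measurableSet_Icc (fun x hx => (hpt x hx).symm)
    have hI12 : IntegrableOn (fun x => ‖deriv g x‖ ^ 2 + (-(q x).re) * ‖g x‖ ^ 2)
        (Icc (-r) r) := by exact hI1.add hI2
    rwa [integral_sub hI12 hI3, integral_add hI1 hI2] at h2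
  -- lower bound for E
  have hE : (γ ^ 2 * c - |γ| * M₂ - M₃) * D ≤ E := by
    rw [hDdef, ← integral_const_mul]
    apply setIntegral_mono_on (hI0.const_mul _) hI2 measurableSet_Icc
    intro x hx
    have h1 : γ ^ 2 * c ≤ γ ^ 2 * a x ^ 2 :=
      mul_le_mul_of_nonneg_left (hc x hx) (sq_nonneg γ)
    have h2 : γ * P x ≤ |γ| * M₂ := by
      calc γ * P x ≤ |γ * P x| := le_abs_self _
        _ = |γ| * |P x| := abs_mul _ _
        _ ≤ |γ| * M₂ := mul_le_mul_of_nonneg_left (hM₂ x hx) (abs_nonneg γ)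
    have h3 : Q s x ≤ M₃ := (le_abs_self _).trans (hM₃ s hs x hx)
    rw [hqre x]
    have : γ ^ 2 * c - |γ| * M₂ - M₃ ≤ γ ^ 2 * a x ^ 2 - γ * P x - Q s x := by linarith
    exact mul_le_mul_of_nonneg_right this (by positivity)
  -- upper bound for T
  have hT : T ≤ (1/2) * A + (M₁ ^ 2 / 2) * D := by
    have step : T ≤ ∫ x in Icc (-r) r,
        ((1/2) * ‖deriv g x‖ ^ 2 + (M₁ ^ 2 / 2) * ‖g x‖ ^ 2) := by
      apply setIntegral_mono_on hI3 ((hI1.const_mul _).add (hI0.const_mul _)) measurableSet_Icc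
      intro x hx
      simp only [Pi.add_apply]
      have h1 : ((β₁ x + β₂ x) * deriv g x * (starRingEnd ℂ) (g x)).re
          ≤ ‖β₁ x + β₂ x‖ * ‖deriv g x‖ * ‖g x‖ := by
        calc ((β₁ x + β₂ x) * deriv g x * (starRingEnd ℂ) (g x)).re
            ≤ ‖(β₁ x + β₂ x) * deriv g x * (starRingEnd ℂ) (g x)‖ :=
              Complex.re_le_norm _
          _ = ‖β₁ x + β₂ x‖ * ‖deriv g x‖ * ‖g x‖ := by
              rw [norm_mul, norm_mul, RCLike.norm_conj]
      have h2 : ‖β₁ x + β₂ x‖ * ‖deriv g x‖ * ‖g x‖ ≤ M₁ * (‖deriv g x‖ * ‖g x‖) := by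
        rw [mul_assoc]
        exact mul_le_mul_of_nonneg_right (hM₁ x hx)
          (mul_nonneg (norm_nonneg _) (norm_nonneg _))
      nlinarith [sq_nonneg (‖deriv g x‖ - M₁ * ‖g x‖), norm_nonneg (g x),
        norm_nonneg (deriv g x), hM₁0]
    rw [integral_add (hI1.const_mul _) (hI0.const_mul _), integral_const_mul,
      integral_const_mul] at step
    exact step
  -- boundary bound
  have hB : φ r - φ (-r) ≤ ‖g (-r) * deriv g (-r)‖ + ‖g r * deriv g r‖ := by
    have h1 : φ r ≤ ‖g r * deriv g r‖ := by
      calc φ r ≤ ‖deriv g r * (starRingEnd ℂ) (g r)‖ :=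
            Complex.re_le_norm _
        _ = ‖g r * deriv g r‖ := by rw [norm_mul, RCLike.norm_conj, norm_mul, mul_comm]
    have h2 : -φ (-r) ≤ ‖g (-r) * deriv g (-r)‖ := by
      calc -φ (-r) ≤ |(deriv g (-r) * (starRingEnd ℂ) (g (-r))).re| := neg_le_abs _
        _ ≤ ‖deriv g (-r) * (starRingEnd ℂ) (g (-r))‖ :=
            Complex.abs_re_le_norm _
        _ = ‖g (-r) * deriv g (-r)‖ := by rw [norm_mul, RCLike.norm_conj, norm_mul, mul_comm]
    linarith
  -- the γ largeness condition
  have hγ1 : 1 ≤ |γ| := le_trans (le_max_left _ _) hγ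
  have hγ2 : 2 * (M₂ + M₃ + M₁ ^ 2 / 2 + 1) / c ≤ |γ| := le_trans (le_max_right _ _) hγ
  have hγsq : |γ| ^ 2 = γ ^ 2 := sq_abs γ
  have hkey : |γ| * M₂ + M₃ + M₁ ^ 2 / 2 ≤ γ ^ 2 * c / 2 := by
    have h4 : 2 * (M₂ + M₃ + M₁ ^ 2 / 2 + 1) ≤ |γ| * c := by
      rw [div_le_iff₀ hc0] at hγ2; linarith
    nlinarith [mul_le_mul_of_nonneg_left h4 (abs_nonneg γ)]
  -- combine
  have hL2g : L2 g (Icc (-r) r) ^ 2 = D :=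
    L2_sq g _ (setIntegral_nonneg measurableSet_Icc (fun x _ => by positivity))
  have hL2g' : L2 (deriv g) (Icc (-r) r) ^ 2 = A :=
    L2_sq (deriv g) _ (setIntegral_nonneg measurableSet_Icc (fun x _ => by positivity))
  clear_value A D T E
  have hhalf : (1/2) * A + (γ ^ 2 * c / 2) * D ≤ ‖g (-r) * deriv g (-r)‖ + ‖g r * deriv g r‖ := by
    have h5 : A + (γ ^ 2 * c - |γ| * M₂ - M₃) * D ≤ φ r - φ (-r) + T := by linarith
    have h6 : (γ ^ 2 * c / 2) * D ≤ (γ ^ 2 * c - |γ| * M₂ - M₃ - M₁ ^ 2 / 2) * D := by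
      apply mul_le_mul_of_nonneg_right _ hD0
      linarith
    have h7 : (γ ^ 2 * c - |γ| * M₂ - M₃) * D
        = (γ ^ 2 * c - |γ| * M₂ - M₃ - M₁ ^ 2 / 2) * D + (M₁ ^ 2 / 2) * D := by ring
    linarith
  -- conclusion
  have hC2 : (2 : ℝ) ≤ C := le_max_left _ _
  have hCc : 2 / c ≤ C := le_max_right _ _
  clear_value C
  have hCc' : 2 ≤ C * c := by rw [div_le_iff₀ hc0] at hCc; linarith
  rw [hL2g, hL2g']
  have hC0 : 0 ≤ C := by linarith
  have hsum0 : 0 ≤ ‖g (-r) * deriv g (-r)‖ + ‖g r * deriv g r‖ :=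
    add_nonneg (norm_nonneg _) (norm_nonneg _)
  have hfin : A + γ ^ 2 * D ≤ C * ((1/2) * A + (γ ^ 2 * c / 2) * D) := by
    have hA' : A ≤ C * ((1/2) * A) := by
      nlinarith [mul_nonneg (by linarith : (0:ℝ) ≤ C - 2) hA0]
    have hD' : γ ^ 2 * D ≤ C * ((γ ^ 2 * c / 2) * D) := by
      nlinarith [mul_nonneg (mul_nonneg (by linarith : (0:ℝ) ≤ C * c - 2) (sq_nonneg γ)) hD0]
    linarith
  calc A + γ ^ 2 * D ≤ C * ((1/2) * A + (γ ^ 2 * c / 2) * D) := hfin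
    _ ≤ C * (‖g (-r) * deriv g (-r)‖ + ‖g r * deriv g r‖) :=
        mul_le_mul_of_nonneg_left hhalf hC0
    _ = C * ‖g (-r) * deriv g (-r)‖ + C * ‖g r * deriv g r‖ := by ring
end

section
/- Let f : [0, ∞) → ℂ be the restriction of a C^∞ function on ℝ, with f(t) = 0 for all t ≥ T for some T < ∞. Then for every γ ∈ ℂ with Im γ > 0 the integral f̂(γ) = ∫₀^∞ f(t)·t^{−iγ}·dt/t converges absolutely, and there exists a function F : ℂ → ℂ that is holomorphic on ℂ ∖ {−ik : k = 0, 1, 2, …}, is meromorphic on ℂ with poles contained in {−ik : k = 0, 1, 2, …}, and satisfies F(γ) = f̂(γ) for all γ with Im γ > 0. -/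
open MeasureTheory Set Filter Topology Asymptotics

/-- The Mellin kernel `t^{-iγ} = exp(-iγ·log t)` for `t > 0`. -/
noncomputable def mellinKer (γ : ℂ) (t : ℝ) : ℂ := Complex.exp (-(Complex.I * γ) * Real.log t)

/-- The substitution `s = -iγ` sending the `γ` variable to the usual Mellin variable. -/
noncomputable def mellinAuxL (γ : ℂ) : ℂ := -(Complex.I * γ)

lemma mellinAuxL_re (γ : ℂ) : (mellinAuxL γ).re = γ.im := by
  simp [mellinAuxL, Complex.mul_re]

/-- The polynomial `∏_{j<n} (s+j)` in the variable `s = -iγ`. -/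
noncomputable def mellinAuxP (n : ℕ) (γ : ℂ) : ℂ :=
  ∏ j ∈ Finset.range n, (mellinAuxL γ + j)

/-- The `n`-th piece of the meromorphic continuation. -/
noncomputable def mellinAuxG (f : ℝ → ℂ) (n : ℕ) (γ : ℂ) : ℂ :=
  (-1) ^ n * mellin (deriv^[n] f) (mellinAuxL γ + n) * (mellinAuxP n γ)⁻¹

/-- The global meromorphic extension. -/
noncomputable def mellinAuxF (f : ℝ → ℂ) (γ : ℂ) : ℂ :=
  mellinAuxG f (⌈-γ.im⌉₊ + 1) γ

lemma mellinAux_vanish (f : ℝ → ℂ) (T : ℝ) (hT : ∀ t, T < t → f t = 0) :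
    ∀ n, ∀ t, T < t → deriv^[n] f t = 0 := by
  intro n
  induction n with
  | zero => exact hT
  | succ n ih =>
    intro t ht
    rw [Function.iterate_succ_apply']
    have h : deriv^[n] f =ᶠ[nhds t] fun _ => (0 : ℂ) :=
      Filter.eventually_of_mem (Ioi_mem_nhds ht) (fun x hx => ih x hx)
    rw [h.deriv_eq]
    exact deriv_const t 0

lemma mellinAux_conv {g : ℝ → ℂ} (hg : ContDiff ℝ ((⊤ : ℕ∞) : WithTop ℕ∞) g) {T : ℝ}
    (hT : ∀ t, T < t → g t = 0) {s : ℂ} (hs : 0 < s.re) :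
    MellinConvergent g s := by
  refine mellinConvergent_of_isBigO_rpow (a := s.re + 1) (b := 0)
    (hg.continuous.locallyIntegrable.locallyIntegrableOn _) ?_ (by linarith) ?_ hs
  · have h0 : g =ᶠ[atTop] (fun _ => (0 : ℂ)) :=
      eventually_atTop.2 ⟨T + 1, fun t ht => hT t (by linarith)⟩
    exact h0.trans_isBigO (isBigO_zero _ _)
  · have h1 : Filter.Tendsto g (nhdsWithin 0 (Ioi 0)) (nhds (g 0)) :=
      (hg.continuous.tendsto 0).mono_left nhdsWithin_le_nhds
    simpa using h1.isBigO_one ℝ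

lemma mellinAux_diff {g : ℝ → ℂ} (hg : ContDiff ℝ ((⊤ : ℕ∞) : WithTop ℕ∞) g) {T : ℝ}
    (hT : ∀ t, T < t → g t = 0) {s : ℂ} (hs : 0 < s.re) :
    DifferentiableAt ℂ (mellin g) s := by
  refine mellin_differentiableAt_of_isBigO_rpow (a := s.re + 1) (b := 0)
    (hg.continuous.locallyIntegrable.locallyIntegrableOn _) ?_ (by linarith) ?_ hs
  · have h0 : g =ᶠ[atTop] (fun _ => (0 : ℂ)) :=
      eventually_atTop.2 ⟨T + 1, fun t ht => hT t (by linarith)⟩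
    exact h0.trans_isBigO (isBigO_zero _ _)
  · have h1 : Filter.Tendsto g (nhdsWithin 0 (Ioi 0)) (nhds (g 0)) :=
      (hg.continuous.tendsto 0).mono_left nhdsWithin_le_nhds
    simpa using h1.isBigO_one ℝ

/-- Integration by parts for the Mellin transform of a smooth function vanishing at infinity. -/
lemma mellinAux_ibp {g : ℝ → ℂ} (hg : ContDiff ℝ ((⊤ : ℕ∞) : WithTop ℕ∞) g) {T : ℝ}
    (hT : ∀ t, T < t → g t = 0) {s : ℂ} (hs : 0 < s.re) :
    mellin g s = -s⁻¹ * mellin (deriv g) (s + 1) := by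
  have hs0 : s ≠ 0 := fun h => by simp [h] at hs
  have hg' : ContDiff ℝ ((⊤ : ℕ∞) : WithTop ℕ∞) (deriv g) := (contDiff_infty_iff_deriv.mp hg).2
  have hT' : ∀ t, T < t → deriv g t = 0 := by
    intro t ht
    have h : g =ᶠ[nhds t] fun _ => (0 : ℂ) :=
      Filter.eventually_of_mem (Ioi_mem_nhds ht) (fun x hx => hT x hx)
    rw [h.deriv_eq]; exact deriv_const t 0
  set u : ℝ → ℂ := fun t => (t : ℂ) ^ s * g t with hu
  set u' : ℝ → ℂ := fun t => s * ((t : ℂ) ^ (s - 1) * g t) + (t : ℂ) ^ s * deriv g t with hu'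
  have hderiv : ∀ t ∈ Ioi (0 : ℝ), HasDerivAt u (u' t) t := by
    intro t ht
    have h1 : HasDerivAt (fun y : ℝ => (y : ℂ) ^ s) (s * (t : ℂ) ^ (s - 1)) t := by
      have h := (hasDerivAt_id ((t : ℝ) : ℂ)).cpow_const
        (c := s) (Or.inl (by simpa using ht))
      simpa using h.comp_ofReal
    have h2 : HasDerivAt g (deriv g t) t :=
      ((contDiff_infty_iff_deriv.mp hg).1 t).hasDerivAt
    have := h1.mul h2
    convert this using 1
    show u' t = _
    simp only [hu']; ring
    all_goals rfl
  have i1 : IntegrableOn (fun t : ℝ => (t : ℂ) ^ (s - 1) * g t) (Ioi 0) volume := by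
    have := mellinAux_conv hg hT hs
    simpa [MellinConvergent, smul_eq_mul] using this
  have i2 : IntegrableOn (fun t : ℝ => (t : ℂ) ^ s * deriv g t) (Ioi 0) volume := by
    have := mellinAux_conv hg' hT' (s := s + 1) (by simp [Complex.add_re]; linarith)
    simpa [MellinConvergent, smul_eq_mul] using this
  have i1' : IntegrableOn (fun t : ℝ => s * ((t : ℂ) ^ (s - 1) * g t)) (Ioi 0) volume :=
    i1.const_mul s
  have iu' : IntegrableOn u' (Ioi 0) volume := i1'.add i2
  have hu0 : u 0 = 0 := by simp [hu, Complex.zero_cpow hs0]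
  have hcont : ContinuousWithinAt u (Ici 0) 0 := by
    rw [ContinuousWithinAt, hu0, ← Set.Ioi_insert, nhdsWithin_insert]
    refine Filter.Tendsto.sup ?_ ?_
    · simpa [hu0] using tendsto_pure_nhds u 0
    · apply squeeze_zero_norm' (a := fun t : ℝ => t ^ s.re * ‖g t‖)
      · filter_upwards [self_mem_nhdsWithin] with t ht
        simp only [hu, norm_mul]
        rw [Complex.norm_cpow_eq_rpow_re_of_pos ht]
      · have hA : Filter.Tendsto (fun t : ℝ => t ^ s.re) (nhdsWithin 0 (Ioi 0)) (nhds 0) := by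
          have := (Real.continuousAt_rpow_const 0 s.re (Or.inr hs.le)).tendsto
          rw [Real.zero_rpow (ne_of_gt hs)] at this
          exact this.mono_left nhdsWithin_le_nhds
        have hB : Filter.Tendsto (fun t : ℝ => ‖g t‖) (nhdsWithin 0 (Ioi 0)) (nhds ‖g 0‖) :=
          ((hg.continuous.norm).tendsto 0).mono_left nhdsWithin_le_nhds
        simpa using hA.mul hB
  have htop : Filter.Tendsto u atTop (nhds 0) := by
    apply Filter.Tendsto.congr' _ tendsto_const_nhds
    filter_upwards [eventually_gt_atTop T] with t ht
    simp [hu, hT t ht]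
  have key : ∫ t in Ioi (0 : ℝ), u' t = 0 - u 0 :=
    integral_Ioi_of_hasDerivAt_of_tendsto hcont hderiv iu' htop
  rw [hu0, sub_zero] at key
  have hsplit : ∫ t in Ioi (0 : ℝ), u' t
      = s * mellin g s + mellin (deriv g) (s + 1) := by
    rw [hu', integral_add i1' i2, integral_const_mul]
    simp [mellin, smul_eq_mul]
  rw [hsplit] at key
  field_simp
  linear_combination key

lemma mellinAuxG_step (f : ℝ → ℂ) (hf : ContDiff ℝ ((⊤ : ℕ∞) : WithTop ℕ∞) f) (T : ℝ)
    (hT : ∀ t, T < t → f t = 0) (n : ℕ) {γ : ℂ} (hγ : -(n : ℝ) < γ.im) :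
    mellinAuxG f n γ = mellinAuxG f (n + 1) γ := by
  have hs : 0 < (mellinAuxL γ + n).re := by
    simp only [Complex.add_re, mellinAuxL_re, Complex.natCast_re]
    linarith
  have hib := mellinAux_ibp (ContDiff.iterate_deriv n hf)
    (mellinAux_vanish f T hT n) hs
  have hd : deriv (deriv^[n] f) = deriv^[n + 1] f :=
    (Function.iterate_succ_apply' deriv n f).symm
  rw [hd] at hib
  unfold mellinAuxG mellinAuxP
  rw [hib, Finset.prod_range_succ]
  have h1 : mellinAuxL γ + ((n : ℕ) + 1 : ℕ) = (mellinAuxL γ + n) + 1 := by push_cast; ring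
  rw [h1, mul_inv]
  ring

lemma mellinAuxG_chain (f : ℝ → ℂ) (hf : ContDiff ℝ ((⊤ : ℕ∞) : WithTop ℕ∞) f) (T : ℝ)
    (hT : ∀ t, T < t → f t = 0) {n m : ℕ} (hnm : n ≤ m) {γ : ℂ} (hγ : -(n : ℝ) < γ.im) :
    mellinAuxG f n γ = mellinAuxG f m γ := by
  induction m, hnm using Nat.le_induction with
  | base => rfl
  | succ m hnm ih =>
    rw [ih, mellinAuxG_step f hf T hT m]
    have : (n : ℝ) ≤ m := by exact_mod_cast hnm
    linarith

lemma mellinAuxG_eq (f : ℝ → ℂ) (hf : ContDiff ℝ ((⊤ : ℕ∞) : WithTop ℕ∞) f) (T : ℝ)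
    (hT : ∀ t, T < t → f t = 0) {n m : ℕ} {γ : ℂ} (hn : -(n : ℝ) < γ.im)
    (hm : -(m : ℝ) < γ.im) : mellinAuxG f n γ = mellinAuxG f m γ := by
  rcases le_total n m with h | h
  · exact mellinAuxG_chain f hf T hT h hn
  · exact (mellinAuxG_chain f hf T hT h hm).symm

lemma mellinAuxN_lt (γ : ℂ) : -((⌈-γ.im⌉₊ + 1 : ℕ) : ℝ) < γ.im := by
  have h := Nat.le_ceil (-γ.im)
  push_cast
  linarith

lemma mellinAuxF_eq (f : ℝ → ℂ) (hf : ContDiff ℝ ((⊤ : ℕ∞) : WithTop ℕ∞) f) (T : ℝ)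
    (hT : ∀ t, T < t → f t = 0) {n : ℕ} {γ : ℂ} (hn : -(n : ℝ) < γ.im) :
    mellinAuxF f γ = mellinAuxG f n γ :=
  mellinAuxG_eq f hf T hT (mellinAuxN_lt γ) hn

lemma mellinAuxQ_an (f : ℝ → ℂ) (hf : ContDiff ℝ ((⊤ : ℕ∞) : WithTop ℕ∞) f) (T : ℝ)
    (hT : ∀ t, T < t → f t = 0) (n : ℕ) {γ : ℂ} (hγ : -(n : ℝ) < γ.im) :
    AnalyticAt ℂ (fun γ => mellin (deriv^[n] f) (mellinAuxL γ + n)) γ := by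
  have hU : IsOpen {γ : ℂ | -(n : ℝ) < γ.im} :=
    isOpen_lt continuous_const Complex.continuous_im
  refine DifferentiableOn.analyticAt ?_ (hU.mem_nhds hγ)
  intro z hz
  have h1 : DifferentiableAt ℂ (mellin (deriv^[n] f)) (mellinAuxL z + n) := by
    refine mellinAux_diff (ContDiff.iterate_deriv n hf) (mellinAux_vanish f T hT n) ?_
    simp only [Complex.add_re, mellinAuxL_re, Complex.natCast_re]
    have : -(n : ℝ) < z.im := hz
    linarith
  have h2 : DifferentiableAt ℂ (fun γ : ℂ => mellinAuxL γ + n) z := by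
    unfold mellinAuxL
    fun_prop
  exact (h1.comp z h2).differentiableWithinAt

lemma mellinAuxP_an (n : ℕ) (γ : ℂ) : AnalyticAt ℂ (mellinAuxP n) γ := by
  unfold mellinAuxP mellinAuxL
  induction n with
  | zero => simpa using analyticAt_const
  | succ n ih =>
    simp only [Finset.prod_range_succ]
    exact ih.mul (((analyticAt_const.mul analyticAt_id).neg).add analyticAt_const)

lemma mellinAuxP_ne (n : ℕ) {γ : ℂ} (hγ : ∀ k : ℕ, γ ≠ -Complex.I * k) :
    mellinAuxP n γ ≠ 0 := by
  unfold mellinAuxP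
  rw [Finset.prod_ne_zero_iff]
  intro j _ h
  apply hγ j
  have h2 : Complex.I * γ = (j : ℂ) := by
    unfold mellinAuxL at h
    linear_combination -h
  have h3 : -Complex.I * (Complex.I * γ) = -Complex.I * (j : ℂ) := by rw [h2]
  calc γ = -Complex.I * (Complex.I * γ) := by
            rw [show -Complex.I * (Complex.I * γ) = -(Complex.I * Complex.I) * γ from by ring,
              Complex.I_mul_I]
            ring
    _ = -Complex.I * (j : ℂ) := h3

/-- For a smooth function on `[0,∞)` vanishing for large `t`, the partial Mellin transform
`f̂(γ) = ∫₀^∞ f(t) t^{-iγ} dt/t` converges absolutely for `Im γ > 0` and extends to a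
meromorphic function on `ℂ` whose poles lie in `{0, -i, -2i, …}`, holomorphic elsewhere. -/
theorem mellin_meromorphic_continuation (f : ℝ → ℂ) (hf : ContDiff ℝ (⊤ : ℕ∞) f)
    (T : ℝ) (hT : ∀ t : ℝ, T ≤ t → f t = 0) :
    (∀ γ : ℂ, 0 < γ.im →
      IntegrableOn (fun t : ℝ => f t * mellinKer γ t * (t : ℂ)⁻¹) (Ioi 0) volume) ∧
    ∃ F : ℂ → ℂ,
      (∀ z : ℂ, z ∉ {w : ℂ | ∃ k : ℕ, w = -Complex.I * k} → DifferentiableAt ℂ F z) ∧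
      MeromorphicOn F (univ : Set ℂ) ∧
      (∀ γ : ℂ, 0 < γ.im →
        F γ = ∫ t in Ioi (0 : ℝ), f t * mellinKer γ t * (t : ℂ)⁻¹) := by
  have hf' : ContDiff ℝ ((⊤ : ℕ∞) : WithTop ℕ∞) f := hf.of_le (by simp)
  have hT' : ∀ t, T < t → f t = 0 := fun t ht => hT t ht.le
  -- pointwise kernel identity
  have hker : ∀ γ : ℂ, ∀ t ∈ Ioi (0 : ℝ),
      (t : ℂ) ^ (mellinAuxL γ - 1) • f t = f t * mellinKer γ t * (t : ℂ)⁻¹ := by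
    intro γ t ht
    have ht' : (0 : ℝ) < t := ht
    have ht0 : (t : ℂ) ≠ 0 := by exact_mod_cast (ne_of_gt ht')
    have hlog : Complex.exp ((Real.log t : ℂ)) = (t : ℂ) := by
      rw [← Complex.ofReal_exp, Real.exp_log ht']
    rw [smul_eq_mul, Complex.cpow_def_of_ne_zero ht0, mul_comm (Complex.log _),
      ← Complex.ofReal_log ht'.le]
    rw [sub_mul, one_mul, Complex.exp_sub, hlog]
    simp only [mellinKer, mellinAuxL, div_eq_mul_inv]
    ring
  constructor
  · intro γ hγ
    have hc : MellinConvergent f (mellinAuxL γ) :=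
      mellinAux_conv hf' hT' (by rw [mellinAuxL_re]; exact hγ)
    exact IntegrableOn.congr_fun hc (fun t ht => hker γ t ht) measurableSet_Ioi
  · refine ⟨mellinAuxF f, ?_, ?_, ?_⟩
    · -- differentiability away from the poles
      intro z hz
      have hz' : ∀ k : ℕ, z ≠ -Complex.I * k := by
        intro k hk
        exact hz ⟨k, hk⟩
      set n : ℕ := ⌈-z.im⌉₊ + 1 with hn
      have hzn : -(n : ℝ) < z.im := mellinAuxN_lt z
      have hU : IsOpen {γ : ℂ | -(n : ℝ) < γ.im} :=
        isOpen_lt continuous_const Complex.continuous_im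
      have hEq : mellinAuxF f =ᶠ[nhds z] mellinAuxG f n :=
        Filter.eventually_of_mem (hU.mem_nhds hzn)
          (fun w hw => mellinAuxF_eq f hf' T hT' hw)
      rw [hEq.differentiableAt_iff]
      unfold mellinAuxG
      refine DifferentiableAt.mul ?_ ?_
      · exact (differentiableAt_const _).mul
          ((mellinAuxQ_an f hf' T hT' n hzn).differentiableAt)
      · exact ((mellinAuxP_an n z).differentiableAt).inv (mellinAuxP_ne n hz')
    · -- meromorphy everywhere
      intro z _
      set n : ℕ := ⌈-z.im⌉₊ + 1 with hn
      have hzn : -(n : ℝ) < z.im := mellinAuxN_lt z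
      have hU : IsOpen {γ : ℂ | -(n : ℝ) < γ.im} :=
        isOpen_lt continuous_const Complex.continuous_im
      have hEq : mellinAuxF f =ᶠ[nhds z] mellinAuxG f n :=
        Filter.eventually_of_mem (hU.mem_nhds hzn)
          (fun w hw => mellinAuxF_eq f hf' T hT' hw)
      have hnum : AnalyticAt ℂ
          (fun γ => (-1 : ℂ) ^ n * mellin (deriv^[n] f) (mellinAuxL γ + n)) z :=
        analyticAt_const.mul (mellinAuxQ_an f hf' T hT' n hzn)
      have hmero : MeromorphicAt (mellinAuxG f n) z := by
        have := hnum.meromorphicAt.mul ((mellinAuxP_an n z).meromorphicAt.inv)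
        exact this
      exact hmero.congr (hEq.symm.filter_mono nhdsWithin_le_nhds)
    · -- agreement with the integral on the upper half-plane
      intro γ hγ
      have h0 : mellinAuxF f γ = mellinAuxG f 0 γ :=
        mellinAuxF_eq f hf' T hT' (n := 0) (by simpa using hγ)
      rw [h0]
      unfold mellinAuxG mellinAuxP
      simp only [pow_zero, one_mul, Finset.prod_range_zero, inv_one, mul_one,
        Nat.cast_zero, add_zero]
      rw [mellin]
      exact setIntegral_congr_fun measurableSet_Ioi (fun t ht => hker γ t ht)
end

section
/- Let f : (0, ∞) → ℂ be continuous with compact support contained in (0, ∞). Then for every real γ the integral ∫₀^∞ f(t)·t^{1/2 − iγ}·dt/t converges absolutely, and ∫₀^∞ |f(t)|²·dt = (2π)^{−1}·∫_ℝ |∫₀^∞ f(t)·t^{1/2 − iγ}·dt/t|²·dγ. -/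
open MeasureTheory Set Complex Filter Bornology
open scoped FourierTransform Topology Convolution Real RealInnerProductSpace

noncomputable section

variable {g : ℝ → ℂ}

private lemma hcs_neg_conj (hs : HasCompactSupport g) :
    HasCompactSupport fun t : ℝ ↦ (starRingEnd ℂ) (g (-t)) :=
  (hs.comp_homeomorph (Homeomorph.neg ℝ)).comp_left (map_zero _)

private lemma integrable_char_mul (hg : Continuous g) (hs : HasCompactSupport g) (ξ : ℝ) :
    Integrable (fun t : ℝ ↦ Complex.exp (↑(-2 * π * t * ξ) * Complex.I) * g t) := by
  apply Continuous.integrable_of_hasCompactSupport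
  · fun_prop
  · exact hs.mul_left

private lemma cc_fourier_autocorr (hg : Continuous g) (hs : HasCompactSupport g) (ξ : ℝ) :
    𝓕 ((fun t ↦ (starRingEnd ℂ) (g (-t))) ⋆[ContinuousLinearMap.mul ℂ ℂ] g) ξ
      = ((‖𝓕 g ξ‖ : ℂ))^2 := by
  set F : ℝ → ℂ := fun t ↦ Complex.exp (↑(-2 * π * t * ξ) * Complex.I) * (starRingEnd ℂ) (g (-t))
    with hF
  set G : ℝ → ℂ := fun t ↦ Complex.exp (↑(-2 * π * t * ξ) * Complex.I) * g t with hG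
  have hGi : Integrable G := integrable_char_mul hg hs ξ
  have hFi : Integrable F := by
    apply Continuous.integrable_of_hasCompactSupport
    · exact (Complex.continuous_exp.comp (by fun_prop)).mul
        (Complex.continuous_conj.comp (hg.comp continuous_neg))
    · exact (hcs_neg_conj hs).mul_left
  have key : ∀ x : ℝ, Complex.exp (↑(-2 * π * x * ξ) * Complex.I)
      • ((fun t ↦ (starRingEnd ℂ) (g (-t))) ⋆[ContinuousLinearMap.mul ℂ ℂ] g) x
      = (F ⋆[ContinuousLinearMap.mul ℂ ℂ] G) x := by
    intro x
    rw [convolution_def, convolution_def, smul_eq_mul, ← integral_const_mul]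
    congr 1
    ext t
    simp only [ContinuousLinearMap.mul_apply', hF, hG]
    rw [show (-2 * π * x * ξ : ℝ) = (-2 * π * t * ξ) + (-2 * π * (x - t) * ξ) by ring]
    push_cast
    rw [add_mul, Complex.exp_add]
    ring
  rw [Real.fourier_real_eq_integral_exp_smul]
  calc ∫ x : ℝ, Complex.exp (↑(-2 * π * x * ξ) * Complex.I)
        • ((fun t ↦ (starRingEnd ℂ) (g (-t))) ⋆[ContinuousLinearMap.mul ℂ ℂ] g) x
      = ∫ x, (F ⋆[ContinuousLinearMap.mul ℂ ℂ] G) x := by simp_rw [key]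
    _ = (∫ x, F x) * ∫ x, G x := by
        simpa using integral_convolution (ContinuousLinearMap.mul ℂ ℂ) hFi hGi
    _ = (starRingEnd ℂ) (𝓕 g ξ) * 𝓕 g ξ := by
        congr 1
        · rw [← MeasureTheory.integral_neg_eq_self (fun t ↦ F t)]
          rw [Real.fourier_real_eq_integral_exp_smul, ← integral_conj]
          congr 1; ext t
          simp only [hF, hG, neg_neg, map_mul, smul_eq_mul, ← Complex.exp_conj,
            Complex.conj_I, Complex.conj_ofReal]
          push_cast
          ring_nf
        · rw [Real.fourier_real_eq_integral_exp_smul]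
          simp [hG]
    _ = ((‖𝓕 g ξ‖ : ℂ))^2 := by
        rw [RCLike.conj_mul]
        norm_cast

private lemma plancherel_cc (hg : Continuous g) (hs : HasCompactSupport g) :
    Integrable (fun ξ : ℝ ↦ ‖𝓕 g ξ‖^2) ∧ ∫ ξ : ℝ, ‖𝓕 g ξ‖^2 = ∫ x : ℝ, ‖g x‖^2 := by
  have hgi : Integrable g := hg.integrable_of_hasCompactSupport hs
  set h := (fun t ↦ (starRingEnd ℂ) (g (-t))) ⋆[ContinuousLinearMap.mul ℂ ℂ] g with hh
  have hconj_cont : Continuous fun t : ℝ ↦ (starRingEnd ℂ) (g (-t)) :=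
    Complex.continuous_conj.comp (hg.comp continuous_neg)
  have hhc : Continuous h :=
    (hcs_neg_conj hs).continuous_convolution_left _ hconj_cont hg.locallyIntegrable
  have hhs : HasCompactSupport h := (hcs_neg_conj hs).convolution _ hs
  have hhi : Integrable h := hhc.integrable_of_hasCompactSupport hhs
  have hFg_cont : Continuous (𝓕 g) :=
    VectorFourier.fourierIntegral_continuous Real.continuous_fourierChar continuous_inner hgi
  set L : ℝ := ∫ x : ℝ, ‖g x‖^2 with hL
  have hLnn : 0 ≤ L := integral_nonneg fun x ↦ by positivity
  -- value of h at 0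
  have h0 : h 0 = (L : ℂ) := by
    rw [hh, convolution_def]
    simp only [ContinuousLinearMap.mul_apply', zero_sub]
    rw [← MeasureTheory.integral_neg_eq_self
      (fun t : ℝ ↦ (starRingEnd ℂ) (g (-t)) * g (-t))]
    simp only [neg_neg]
    calc ∫ x : ℝ, (starRingEnd ℂ) (g x) * g x
        = ∫ x : ℝ, ((‖g x‖^2 : ℝ) : ℂ) := by
          congr 1; ext x; rw [RCLike.conj_mul]; norm_cast
      _ = (L : ℂ) := by rw [hL]; exact integral_ofReal
  have hflipinner : (innerₗ ℝ).flip = innerₗ ℝ := by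
    apply LinearMap.ext; intro a
    apply LinearMap.ext; intro b
    simpa using real_inner_comm a b
  -- Gaussian-smoothed limit
  have T1 := Real.tendsto_integral_gaussian_smul' (V := ℝ) hhi (hhc.continuousAt (x := (0:ℝ)))
  have T2 : Tendsto (fun c : ℝ ↦ ∫ x : ℝ, rexp (-c⁻¹ * x^2) * ‖𝓕 g x‖^2)
      atTop (𝓝 L) := by
    have T1' : Tendsto
        (fun c : ℝ ↦ ∫ x : ℝ, Complex.exp (-(c:ℂ)⁻¹ * ‖x‖^2) * ((‖𝓕 g x‖ : ℂ))^2)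
        atTop (𝓝 (h 0)) := by
      apply T1.congr'
      filter_upwards [Ioi_mem_atTop 0] with c (hc : 0 < c)
      have hcre : 0 < ((c : ℂ)⁻¹).re := by
        simp only [← Complex.ofReal_inv, Complex.ofReal_re]
        positivity
      have J : Integrable (fun x : ℝ ↦ Complex.exp (-(c:ℂ)⁻¹ * ‖x‖^2)) := by
        simpa using GaussianFourier.integrable_cexp_neg_mul_sq_norm_add (V := ℝ) hcre 0 0
      have flip := VectorFourier.integral_fourierIntegral_smul_eq_flip (L := innerₗ ℝ)
        Real.continuous_fourierChar continuous_inner J hhi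
      have gauss : ∀ w : ℝ, VectorFourier.fourierIntegral 𝐞 volume (innerₗ ℝ)
          (fun x : ℝ ↦ Complex.exp (-(c:ℂ)⁻¹ * ‖x‖^2)) w
          = (π * c : ℂ) ^ ((Module.finrank ℝ ℝ : ℂ) / 2) * Complex.exp (-π^2 * c * ‖(0:ℝ) - w‖^2) := by
        intro w
        rw [show VectorFourier.fourierIntegral 𝐞 volume (innerₗ ℝ)
            (fun x : ℝ ↦ Complex.exp (-(c:ℂ)⁻¹ * ‖x‖^2)) w
            = 𝓕 (fun x : ℝ ↦ Complex.exp (-(c:ℂ)⁻¹ * ‖x‖^2)) w from rfl,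
          fourier_gaussian_innerProductSpace hcre w]
        have hc0 : (c : ℂ) ≠ 0 := by exact_mod_cast hc.ne'
        congr 1
        · rw [div_eq_mul_inv, inv_inv]
        · rw [zero_sub, norm_neg]
          congr 1
          field_simp
      calc ∫ w : ℝ, ((π * c : ℂ) ^ ((Module.finrank ℝ ℝ : ℂ) / 2)
              * Complex.exp (-π^2 * c * ‖(0:ℝ) - w‖^2)) • h w
          = ∫ w : ℝ, VectorFourier.fourierIntegral 𝐞 volume (innerₗ ℝ)
              (fun x : ℝ ↦ Complex.exp (-(c:ℂ)⁻¹ * ‖x‖^2)) w • h w := by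
            simp_rw [gauss]
        _ = ∫ x : ℝ, Complex.exp (-(c:ℂ)⁻¹ * ‖x‖^2)
              • VectorFourier.fourierIntegral 𝐞 volume (innerₗ ℝ).flip h x := flip
        _ = ∫ x : ℝ, Complex.exp (-(c:ℂ)⁻¹ * ‖x‖^2) * ((‖𝓕 g x‖ : ℂ))^2 := by
            congr 1
            ext x
            rw [smul_eq_mul, hflipinner,
              show VectorFourier.fourierIntegral 𝐞 volume (innerₗ ℝ) h x = 𝓕 h x from rfl,
              cc_fourier_autocorr hg hs x]
    have T1'' : Tendsto
        (fun c : ℝ ↦ (∫ x : ℝ, Complex.exp (-(c:ℂ)⁻¹ * ‖x‖^2) * ((‖𝓕 g x‖ : ℂ))^2).re)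
        atTop (𝓝 ((h 0).re)) := (Complex.continuous_re.tendsto _).comp T1'
    rw [h0] at T1''
    simp only [Complex.ofReal_re] at T1''
    apply T1''.congr
    intro c
    have key : ∀ x : ℝ, Complex.exp (-(c:ℂ)⁻¹ * ‖x‖^2) * ((‖𝓕 g x‖ : ℂ))^2
        = ((rexp (-c⁻¹ * x^2) * ‖𝓕 g x‖^2 : ℝ) : ℂ) := by
      intro x
      have e1 : (-(c:ℂ)⁻¹ * (‖x‖:ℂ)^2) = ((-c⁻¹ * x^2 : ℝ) : ℂ) := by
        rw [Real.norm_eq_abs]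
        push_cast
        rw [show ((|x| : ℝ) : ℂ)^2 = ((x : ℂ))^2 by norm_cast; exact _root_.sq_abs x]
      rw [e1, ← Complex.ofReal_exp]
      push_cast
      ring
    simp_rw [key]
    rw [show (∫ x : ℝ, ((rexp (-c⁻¹ * x^2) * ‖𝓕 g x‖^2 : ℝ) : ℂ))
        = ((∫ x : ℝ, rexp (-c⁻¹ * x^2) * ‖𝓕 g x‖^2 : ℝ) : ℂ) from integral_ofReal,
      Complex.ofReal_re]
  -- boundedness and measurability
  have hmeas : AEStronglyMeasurable (fun ξ : ℝ ↦ ‖𝓕 g ξ‖^2) volume :=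
    (hFg_cont.norm.pow 2).aestronglyMeasurable
  have hbdd : ∀ x : ℝ, ‖𝓕 g x‖^2 ≤ (∫ x : ℝ, ‖g x‖)^2 := fun x ↦
    pow_le_pow_left₀ (norm_nonneg _)
      (VectorFourier.norm_fourierIntegral_le_integral_norm 𝐞 volume (innerₗ ℝ) g x) 2
  have hInt : ∀ c : ℝ, 0 < c → Integrable (fun x : ℝ ↦ rexp (-c⁻¹ * x^2) * ‖𝓕 g x‖^2) := by
    intro c hc
    have hgauss : Integrable (fun x : ℝ ↦ rexp (-c⁻¹ * x^2)) :=
      integrable_exp_neg_mul_sq (by positivity)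
    have := hgauss.bdd_mul hmeas (c := (∫ x : ℝ, ‖g x‖)^2) (Eventually.of_forall fun x ↦ by
      rw [Real.norm_eq_abs, _root_.abs_of_nonneg (by positivity : (0:ℝ) ≤ ‖𝓕 g x‖^2)]; exact hbdd x)
    simpa [mul_comm] using this
  have hnat : Tendsto (fun n : ℕ ↦ ((n : ℝ) + 1)) atTop atTop :=
    tendsto_atTop_add_const_right _ 1 tendsto_natCast_atTop_atTop
  have mct := lintegral_tendsto_of_tendsto_of_monotone (μ := volume)
      (f := fun (n : ℕ) (x : ℝ) ↦ ENNReal.ofReal (rexp (-((n : ℝ) + 1)⁻¹ * x^2) * ‖𝓕 g x‖^2))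
      (F := fun x : ℝ ↦ ENNReal.ofReal (‖𝓕 g x‖^2)) ?_ ?_ ?_
  · have lim2 : Tendsto
        (fun n : ℕ ↦ ∫⁻ x, ENNReal.ofReal (rexp (-((n:ℝ)+1)⁻¹ * x^2) * ‖𝓕 g x‖^2))
        atTop (𝓝 (ENNReal.ofReal L)) := by
      have e : ∀ n : ℕ, ∫⁻ x, ENNReal.ofReal (rexp (-((n:ℝ)+1)⁻¹ * x^2) * ‖𝓕 g x‖^2)
          = ENNReal.ofReal (∫ x : ℝ, rexp (-((n:ℝ)+1)⁻¹ * x^2) * ‖𝓕 g x‖^2) := fun n ↦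
        (ofReal_integral_eq_lintegral_ofReal (hInt _ (by positivity))
          (Eventually.of_forall fun x ↦ by positivity)).symm
      simp_rw [e]
      exact (ENNReal.continuous_ofReal.tendsto L).comp (T2.comp hnat)
    have hkey : ∫⁻ x : ℝ, ENNReal.ofReal (‖𝓕 g x‖^2) = ENNReal.ofReal L :=
      tendsto_nhds_unique mct lim2
    have hint : Integrable (fun ξ : ℝ ↦ ‖𝓕 g ξ‖^2) := by
      refine ⟨hmeas, ?_⟩
      rw [hasFiniteIntegral_iff_ofReal (Eventually.of_forall fun x ↦ by positivity), hkey]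
      exact ENNReal.ofReal_lt_top
    refine ⟨hint, ?_⟩
    rw [integral_eq_lintegral_of_nonneg_ae (Eventually.of_forall fun x ↦ by positivity) hmeas,
      hkey, ENNReal.toReal_ofReal hLnn]
  · intro n
    exact (ENNReal.continuous_ofReal.comp ((Real.continuous_exp.comp (by fun_prop)).mul
      (hFg_cont.norm.pow 2))).measurable.aemeasurable
  · refine Eventually.of_forall fun x ↦ ?_
    intro n m hnm
    have h1 : ((m:ℝ)+1)⁻¹ ≤ ((n:ℝ)+1)⁻¹ := by
      have hle : ((n:ℝ)+1) ≤ ((m:ℝ)+1) := by exact_mod_cast Nat.succ_le_succ hnm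
      exact inv_anti₀ (by positivity) hle
    apply ENNReal.ofReal_le_ofReal
    apply mul_le_mul_of_nonneg_right _ (by positivity)
    apply Real.exp_le_exp.2
    have hx : (0:ℝ) ≤ x^2 := sq_nonneg x
    nlinarith
  · refine Eventually.of_forall fun x ↦ ?_
    have t0 : Tendsto (fun n : ℕ ↦ ((n:ℝ)+1)⁻¹) atTop (𝓝 0) :=
      tendsto_inv_atTop_zero.comp hnat
    have t1 : Tendsto (fun n : ℕ ↦ -((n:ℝ)+1)⁻¹ * x^2) atTop (𝓝 0) := by
      simpa using (t0.neg.mul_const (x^2))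
    have t2 : Tendsto (fun n : ℕ ↦ rexp (-((n:ℝ)+1)⁻¹ * x^2) * ‖𝓕 g x‖^2)
        atTop (𝓝 (‖𝓕 g x‖^2)) := by
      simpa using ((Real.continuous_exp.tendsto 0).comp t1).mul_const (‖𝓕 g x‖^2)
    exact (ENNReal.continuous_ofReal.tendsto _).comp t2

private lemma exp_image_univ : Ioi (0:ℝ) = Real.exp '' univ := by
  rw [image_univ, Real.range_exp]

private lemma integral_Ioi_comp_exp {E : Type*} [NormedAddCommGroup E] [NormedSpace ℝ E]
    (F : ℝ → E) : ∫ t in Ioi (0:ℝ), F t = ∫ x : ℝ, Real.exp x • F (Real.exp x) := by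
  rw [exp_image_univ, integral_image_eq_integral_abs_deriv_smul MeasurableSet.univ
    (fun x _ ↦ (Real.hasDerivAt_exp x).hasDerivWithinAt) Real.exp_injective.injOn F,
    setIntegral_univ]
  congr 1
  ext x
  rw [abs_of_pos (Real.exp_pos x)]

/-- Shifted Mellin–Plancherel formula: for `f` continuous with compact support in `(0,∞)`,
the integrals `∫₀^∞ f(t) t^{1/2-iγ} dt/t` converge absolutely and
`∫₀^∞ |f(t)|² dt = (2π)⁻¹ ∫_ℝ |∫₀^∞ f(t) t^{1/2-iγ} dt/t|² dγ`. -/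
theorem mellin_plancherel_shifted (f : ℝ → ℂ) (hf : Continuous f)
    (hsupp : HasCompactSupport f) (hpos : tsupport f ⊆ Ioi 0) :
    (∀ γ : ℝ,
      IntegrableOn
        (fun t : ℝ => f t * Complex.exp ((1/2 - Complex.I * γ) * Real.log t) * (t : ℂ)⁻¹)
        (Ioi 0) volume) ∧
    (∫ t in Ioi (0 : ℝ), ‖f t‖ ^ 2)
      = (2 * Real.pi)⁻¹ *
        ∫ γ : ℝ,
          ‖∫ t in Ioi (0 : ℝ),
              f t * Complex.exp ((1/2 - Complex.I * γ) * Real.log t) * (t : ℂ)⁻¹‖ ^ 2 := by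
  set g : ℝ → ℂ := fun x ↦ f (Real.exp x) * ((Real.exp (x/2) : ℝ) : ℂ) with hgdef
  have hgc : Continuous g := (hf.comp Real.continuous_exp).mul
    (Complex.continuous_ofReal.comp (Real.continuous_exp.comp (continuous_id.div_const 2)))
  have hgs : HasCompactSupport g := by
    apply HasCompactSupport.intro
      (hsupp.image_of_continuousOn (Real.continuousOn_log.mono (fun x hx ↦ ?_)))
      (fun x hx ↦ ?_)
    · exact ne_of_gt (hpos hx)
    · have : f (Real.exp x) = 0 := by
        by_contra hne
        exact hx ⟨Real.exp x, subset_tsupport f hne, Real.log_exp x⟩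
      simp [hgdef, this]
  -- pointwise identity after the substitution t = exp x
  have hptwise : ∀ (γ : ℝ) (x : ℝ), Real.exp x • (f (Real.exp x)
      * Complex.exp ((1/2 - Complex.I * γ) * Real.log (Real.exp x)) * ((Real.exp x : ℝ) : ℂ)⁻¹)
      = g x * Complex.exp (-(Complex.I * γ) * x) := by
    intro γ x
    have hne : ((Real.exp x : ℝ) : ℂ) ≠ 0 := by
      simpa using (Real.exp_pos x).ne'
    have hsplit : Complex.exp ((1/2 - Complex.I * γ) * (x : ℂ))
        = ((Real.exp (x/2) : ℝ) : ℂ) * Complex.exp (-(Complex.I * γ) * x) := by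
      rw [Complex.ofReal_exp, ← Complex.exp_add]
      congr 1
      push_cast
      ring
    rw [Real.log_exp, Complex.real_smul, hsplit, hgdef]
    field_simp
  have hIntg : ∀ γ : ℝ, Integrable (fun x : ℝ ↦ g x * Complex.exp (-(Complex.I * γ) * x)) := by
    intro γ
    apply Continuous.integrable_of_hasCompactSupport
    · exact hgc.mul (Complex.continuous_exp.comp (by fun_prop))
    · exact hgs.mul_right
  have hInt : ∀ γ : ℝ,
      IntegrableOn
        (fun t : ℝ => f t * Complex.exp ((1/2 - Complex.I * γ) * Real.log t) * (t : ℂ)⁻¹)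
        (Ioi 0) volume := by
    intro γ
    rw [show Ioi (0:ℝ) = Real.exp '' univ from exp_image_univ,
      integrableOn_image_iff_integrableOn_abs_deriv_smul MeasurableSet.univ
        (fun x _ ↦ (Real.hasDerivAt_exp x).hasDerivWithinAt) Real.exp_injective.injOn]
    rw [integrableOn_univ]
    apply (hIntg γ).congr
    refine Eventually.of_forall fun x ↦ ?_
    show g x * Complex.exp (-(Complex.I * γ) * x)
        = |Real.exp x| • (f (Real.exp x)
          * Complex.exp ((1/2 - Complex.I * γ) * Real.log (Real.exp x))
          * ((Real.exp x : ℝ) : ℂ)⁻¹)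
    rw [← hptwise γ x, abs_of_pos (Real.exp_pos x)]
  refine ⟨hInt, ?_⟩
  -- identify the Mellin-type integral with a Fourier transform of g
  have hTg : ∀ γ : ℝ,
      (∫ t in Ioi (0:ℝ), f t * Complex.exp ((1/2 - Complex.I * γ) * Real.log t) * (t : ℂ)⁻¹)
        = 𝓕 g (γ / (2*π)) := by
    intro γ
    rw [integral_Ioi_comp_exp, Real.fourier_real_eq_integral_exp_smul]
    congr 1
    ext x
    rw [hptwise γ x, smul_eq_mul, mul_comm (Complex.exp _) (g x)]
    congr 2
    rw [show (-2 * π * x * (γ / (2*π)) : ℝ) = -(x * γ) by field_simp]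
    push_cast
    ring
  calc (∫ t in Ioi (0 : ℝ), ‖f t‖ ^ 2)
      = ∫ x : ℝ, ‖g x‖^2 := by
        rw [integral_Ioi_comp_exp (fun t ↦ ‖f t‖^2)]
        congr 1
        ext x
        rw [smul_eq_mul, hgdef]
        simp only [norm_mul, Complex.norm_real, Real.norm_eq_abs,
          abs_of_pos (Real.exp_pos _), mul_pow]
        rw [show rexp (x/2)^2 = rexp x by rw [sq, ← Real.exp_add]; norm_num]
        ring
    _ = ∫ ξ : ℝ, ‖𝓕 g ξ‖^2 := (plancherel_cc hgc hgs).2.symm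
    _ = (2 * π)⁻¹ * ∫ γ : ℝ, ‖𝓕 g (γ / (2*π))‖^2 := by
        rw [MeasureTheory.Measure.integral_comp_div (fun ξ : ℝ ↦ ‖𝓕 g ξ‖^2) (2*π)]
        rw [abs_of_pos Real.two_pi_pos, smul_eq_mul, ← mul_assoc,
          inv_mul_cancel₀ Real.two_pi_pos.ne', one_mul]
    _ = (2 * π)⁻¹ * ∫ γ : ℝ,
          ‖∫ t in Ioi (0 : ℝ),
              f t * Complex.exp ((1/2 - Complex.I * γ) * Real.log t) * (t : ℂ)⁻¹‖ ^ 2 := by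
        simp_rw [hTg]

end
end
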